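/- arXiv:2006.16894 — 5 statements merged into one kernel-verified Lean document; each statement's English description precedes it below -/
import Mathlib

section
/- Let η = 1, α = 1, λ > 0, T > 0, and define y(t) = 1 + log(1 + λ(T−t)/e) for t ∈ [0, T]. With f(x) = e^{−x}, F(x) = 1 − e^{−x} (exponential with rate 1), y satisfies the fixed-point equation y(t) = (1 − F(y(t)))/f(y(t)) + λ·∫_t^T ((1 − F(y(s)))²)/f(y(s)) ds for all t ∈ [0, T]. -/
/-!
For the rate-one exponential distribution the hazard ratio `(1 - F x) / f x` is identically `1`
and `(1 - F x) ^ 2 / f x = exp (-x)`. Along the cutoff curve `exp (-y s) = 1 / (e + λ (T - s))`,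
so the integral term is `λ ∫ 1 / (e + λ (T - s)) ds = log (1 + λ (T - t) / e) = y t - 1`.
-/

open Real

theorem integral_one_div_add_mul_sub {a lam T t : ℝ} (hlam : lam ≠ 0) (ha : 0 < a)
    (hat : 0 < a + lam * (T - t)) :
    ∫ s in t..T, 1 / (a + lam * (T - s)) = lam⁻¹ * log ((a + lam * (T - t)) / a) := by
  have hshift : ∀ s, a + lam * (T - s) = (a + lam * T) - lam * s := fun s => by ring
  simp only [hshift]
  rw [intervalIntegral.integral_comp_sub_mul (fun x => 1 / x) hlam,
    integral_one_div_of_pos (by linarith) (by linarith), smul_eq_mul]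
  ring_nf

theorem exp_neg_add_log_one_add_div_exp {a x : ℝ} (hx : 0 < exp a + x) :
    exp (-(a + log (1 + x / exp a))) = 1 / (exp a + x) := by
  have hexp : 1 + x / exp a = (exp a + x) / exp a := by field_simp
  rw [hexp, neg_add, exp_add, exp_neg, exp_neg, exp_log (div_pos hx (exp_pos a))]
  field_simp

theorem exp_cutoff_solves_fixed_point_general (lam T : ℝ) (hlam : 0 < lam)
    (f F y : ℝ → ℝ)
    (hf : ∀ x : ℝ, f x = Real.exp (-x))
    (hF : ∀ x : ℝ, F x = 1 - Real.exp (-x))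
    (hy : ∀ t : ℝ, y t = 1 + Real.log (1 + lam * (T - t) / Real.exp 1)) :
    ∀ t ∈ Set.Icc (0:ℝ) T,
      y t = (1 - F (y t)) / f (y t) +
        lam * ∫ s in t..T, (1 - F (y s)) ^ 2 / f (y s) := by
  rintro t ⟨-, htT⟩
  have hpos : ∀ s ∈ Set.uIcc t T, 0 < exp 1 + lam * (T - s) := fun s hs => by
    rw [Set.uIcc_of_le htT] at hs
    nlinarith [exp_pos 1, hs.2]
  have hratio : ∀ x, (1 - F x) / f x = 1 := fun x => by
    simp [hf, hF]
  have hintegrand : ∀ s ∈ Set.uIcc t T,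
      (1 - F (y s)) ^ 2 / f (y s) = 1 / (exp 1 + lam * (T - s)) := fun s hs => by
    rw [hf, hF, sub_sub_cancel, sq, mul_div_cancel_right₀ _ (exp_pos _).ne', hy,
      exp_neg_add_log_one_add_div_exp (hpos s hs)]
  have hexp : (exp 1 + lam * (T - t)) / exp 1 = 1 + lam * (T - t) / exp 1 := by
    field_simp
  rw [hratio, intervalIntegral.integral_congr hintegrand,
    integral_one_div_add_mul_sub hlam.ne' (exp_pos 1) (hpos t Set.left_mem_uIcc),
    ← mul_assoc, mul_inv_cancel₀ hlam.ne', one_mul, hexp, hy]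

theorem exp_cutoff_solves_fixed_point (lam T : ℝ) (hlam : 0 < lam) (hT : 0 < T)
    (f F y : ℝ → ℝ)
    (hf : ∀ x : ℝ, f x = Real.exp (-x))
    (hF : ∀ x : ℝ, F x = 1 - Real.exp (-x))
    (hy : ∀ t : ℝ, y t = 1 + Real.log (1 + lam * (T - t) / Real.exp 1)) :
    ∀ t ∈ Set.Icc (0:ℝ) T,
      y t = (1 - F (y t)) / f (y t) +
        lam * ∫ s in t..T, (1 - F (y s)) ^ 2 / f (y s) :=
  exp_cutoff_solves_fixed_point_general lam T hlam f F y hf hF hy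
end

section
/- Let η = 1, β > 0, λ > 0, T > 0, and define y(t) = β·(1 − 2/(λ(T−t) + 4)) for t ∈ [0, T]. With f(x) = 1/β and F(x) = x/β on [0, β] (uniform distribution), y satisfies the equation y(t) = (1 − F(y(t)))/f(y(t)) + λ·∫_t^T ((1 − F(y(s)))²)/f(y(s)) ds for all t ∈ [0, T]. -/
/-!
Writing `u(s) = λ(T - s) + 4`, the uniform distribution gives `1 - F(y(s)) = 2/u(s)`, so the
integrand is `4β/u(s)²`, an exact derivative of `4β/(λ u(s))`; the integral is then explicit and
the identity reduces to `β(1 - 2/u) = 2β/u + β(1 - 4/u)`.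
-/

open Set intervalIntegral

theorem integral_inv_sq_affine {a b c d : ℝ} (hc : c ≠ 0)
    (h : ∀ x ∈ uIcc a b, c * x + d ≠ 0) :
    ∫ x in a..b, ((c * x + d) ^ 2)⁻¹ = ((c * a + d)⁻¹ - (c * b + d)⁻¹) / c := by
  have hderiv : ∀ x ∈ uIcc a b,
      HasDerivAt (fun x => -(c * x + d)⁻¹ / c) ((c * x + d) ^ 2)⁻¹ x := by
    intro x hx
    have hlin : HasDerivAt (fun x => c * x + d) c x := by
      simpa using ((hasDerivAt_id x).const_mul c).add_const d
    exact ((hlin.inv (h x hx)).neg.div_const c).congr_deriv (by field_simp)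
  have hcont : ContinuousOn (fun x => ((c * x + d) ^ 2)⁻¹) (uIcc a b) :=
    (by fun_prop : Continuous fun x => (c * x + d) ^ 2).continuousOn.inv₀
      fun x hx => pow_ne_zero 2 (h x hx)
  rw [integral_eq_sub_of_hasDerivAt hderiv hcont.intervalIntegrable]
  ring

theorem unif_cutoff_solves_fixed_point_general (lam T β : ℝ)
    (hlam : 0 < lam) (hβ : 0 < β)
    (f F y : ℝ → ℝ)
    (hf : ∀ x : ℝ, f x = 1 / β)
    (hF : ∀ x : ℝ, F x = x / β)
    (hy : ∀ t : ℝ, y t = β * (1 - 2 / (lam * (T - t) + 4))) :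
    ∀ t ∈ Set.Icc (0:ℝ) T,
      y t = (1 - F (y t)) / f (y t) +
        lam * ∫ s in t..T, (1 - F (y s)) ^ 2 / f (y s) := by
  rintro t ⟨-, htT⟩
  have hu : ∀ s, lam * (T - s) + 4 = -lam * s + (lam * T + 4) := fun s => by ring
  have hgap : ∀ s, 1 - F (y s) = 2 / (-lam * s + (lam * T + 4)) := fun s => by
    rw [hF, hy, mul_div_cancel_left₀ _ hβ.ne', hu]
    ring
  have hu_pos : ∀ s ∈ uIcc t T, 0 < -lam * s + (lam * T + 4) := fun s hs => by
    rw [uIcc_of_le htT] at hs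
    nlinarith [hs.2]
  have hintegral : ∫ s in t..T, (1 - F (y s)) ^ 2 / f (y s) =
      4 * β * (((-lam * t + (lam * T + 4))⁻¹ - (-lam * T + (lam * T + 4))⁻¹) / -lam) := by
    simp only [hgap, hf, one_div, div_inv_eq_mul, div_pow, ← integral_const_mul,
      ← integral_inv_sq_affine (neg_ne_zero.2 hlam.ne') fun s hs => (hu_pos s hs).ne']
    congr 1 with s
    ring
  have hut_ne := (hu_pos t left_mem_uIcc).ne'
  rw [hintegral, hgap, hf, hy, hu]
  field_simp
  ring

theorem unif_cutoff_solves_fixed_point (lam T β : ℝ)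
    (hlam : 0 < lam) (hT : 0 < T) (hβ : 0 < β)
    (f F y : ℝ → ℝ)
    (hf : ∀ x : ℝ, f x = 1 / β)
    (hF : ∀ x : ℝ, F x = x / β)
    (hy : ∀ t : ℝ, y t = β * (1 - 2 / (lam * (T - t) + 4))) :
    ∀ t ∈ Set.Icc (0:ℝ) T,
      y t = (1 - F (y t)) / f (y t) +
        lam * ∫ s in t..T, (1 - F (y s)) ^ 2 / f (y s) :=
  unif_cutoff_solves_fixed_point_general lam T β hlam hβ f F y hf hF hy
end

section
/- Let λ > 0, T > 0, η = 1, α = 1, and define y₂(t) = 1 + log(1 + λ²(T−t)²/(2e(λ(T−t) + e))) and y₃(t) = 1 + log(1 + λ³(T−t)³/(3e(λ²(T−t)² + 2e(λ(T−t) + e)))). Then y₃(t) ≤ y₂(t) for all t ∈ [0, T]. -/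
/-! Writing `x = λ(T - t) ≥ 0` and `c = e`, the two arguments of the logarithm compare as
`x³ / (3c(x² + 2c(x + c))) ≤ x² / (2c(x + c))`; after clearing denominators this is
`0 ≤ x⁴ + 4c x³ + 6c² x²`, and the logarithm is monotone. -/

lemma cube_ratio_le_square_ratio {c x : ℝ} (hc : 0 < c) (hx : 0 ≤ x) :
    x ^ 3 / (3 * c * (x ^ 2 + 2 * c * (x + c))) ≤ x ^ 2 / (2 * c * (x + c)) := by
  rw [div_le_div_iff₀ (by positivity) (by positivity)]
  have hx3 : 0 ≤ x ^ 3 := by positivity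
  nlinarith [mul_nonneg hc.le hx3, mul_nonneg (mul_nonneg hc.le hc.le) (sq_nonneg x),
    pow_nonneg hx 4]

theorem third_cutoff_below_second_general (lam T : ℝ) (hlam : 0 < lam)
    (y₂ y₃ : ℝ → ℝ)
    (hy₂ : ∀ t : ℝ, y₂ t = 1 + Real.log (1 +
      lam ^ 2 * (T - t) ^ 2 / (2 * Real.exp 1 * (lam * (T - t) + Real.exp 1))))
    (hy₃ : ∀ t : ℝ, y₃ t = 1 + Real.log (1 +
      lam ^ 3 * (T - t) ^ 3 / (3 * Real.exp 1 *
        (lam ^ 2 * (T - t) ^ 2 + 2 * Real.exp 1 * (lam * (T - t) + Real.exp 1))))) :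
    ∀ t ∈ Set.Icc (0:ℝ) T, y₃ t ≤ y₂ t := by
  rintro t ⟨-, htT⟩
  have hx : 0 ≤ lam * (T - t) := mul_nonneg hlam.le (sub_nonneg.mpr htT)
  have hratio := cube_ratio_le_square_ratio (Real.exp_pos 1) hx
  rw [hy₂, hy₃, ← mul_pow, ← mul_pow]
  gcongr

theorem third_cutoff_below_second (lam T : ℝ) (hlam : 0 < lam) (hT : 0 < T)
    (y₂ y₃ : ℝ → ℝ)
    (hy₂ : ∀ t : ℝ, y₂ t = 1 + Real.log (1 +
      lam ^ 2 * (T - t) ^ 2 / (2 * Real.exp 1 * (lam * (T - t) + Real.exp 1))))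
    (hy₃ : ∀ t : ℝ, y₃ t = 1 + Real.log (1 +
      lam ^ 3 * (T - t) ^ 3 / (3 * Real.exp 1 *
        (lam ^ 2 * (T - t) ^ 2 + 2 * Real.exp 1 * (lam * (T - t) + Real.exp 1))))) :
    ∀ t ∈ Set.Icc (0:ℝ) T, y₃ t ≤ y₂ t :=
  third_cutoff_below_second_general lam T hlam y₂ y₃ hy₂ hy₃
end

section
/- Let f be a positive continuous density with cdf F, let λ > 0, and suppose y : [0, T] → ℝ is continuously differentiable and satisfies y(t) = (1 − F(y(t)))/f(y(t)) + λ∫_t^T (1 − F(y(s)))²/f(y(s)) ds on [0, T]. Define R(t) = λ∫_t^T (1 − F(y(s)))²/f(y(s)) ds. Then R satisfies the differential equation R'(t) = λ(1 − F(y(t)))·(R(t) − y(t)) with terminal condition R(T) = 0. -/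
open Set intervalIntegral MeasureTheory

theorem candidate_revenue_solves_ode (lam T : ℝ) (hlam : 0 < lam) (hT : 0 < T)
    (f F y : ℝ → ℝ)
    (hfc : Continuous f) (hfpos : ∀ x : ℝ, 0 < f x)
    (hF : ∀ x : ℝ, HasDerivAt F (f x) x)
    (hyC1 : ContDiffOn ℝ 1 y (Set.Icc 0 T))
    (heq : ∀ t ∈ Set.Icc (0:ℝ) T,
      y t = (1 - F (y t)) / f (y t) +
        lam * ∫ s in t..T, (1 - F (y s)) ^ 2 / f (y s))
    (R : ℝ → ℝ)
    (hR : ∀ t : ℝ, R t = lam * ∫ s in t..T, (1 - F (y s)) ^ 2 / f (y s)) :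
    R T = 0 ∧ ∀ t ∈ Set.Ioo (0:ℝ) T,
      HasDerivAt R (lam * (1 - F (y t)) * (R t - y t)) t := by
  set g : ℝ → ℝ := fun s => (1 - F (y s)) ^ 2 / f (y s) with hg
  have hFc : Continuous F :=
    continuous_iff_continuousAt.2 fun x => (hF x).continuousAt
  have hy_cont : ContinuousOn y (Icc 0 T) := hyC1.continuousOn
  have hg_cont : ContinuousOn g (Icc 0 T) := by
    apply ContinuousOn.div
    · exact ((continuousOn_const.sub (hFc.comp_continuousOn hy_cont)).pow 2)
    · exact hfc.comp_continuousOn hy_cont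
    · intro x _; exact (hfpos (y x)).ne'
  refine ⟨by rw [hR T, intervalIntegral.integral_same, mul_zero], ?_⟩
  intro t ht
  have htIcc : t ∈ Icc (0:ℝ) T := ⟨ht.1.le, ht.2.le⟩
  have hcontAt : ContinuousAt g t :=
    hg_cont.continuousAt (Icc_mem_nhds ht.1 ht.2)
  have hint1 : IntervalIntegrable g volume 0 t := by
    apply ContinuousOn.intervalIntegrable
    apply hg_cont.mono
    rw [uIcc_of_le ht.1.le]
    exact Icc_subset_Icc le_rfl ht.2.le
  have hintT : IntervalIntegrable g volume 0 T := by
    apply ContinuousOn.intervalIntegrable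
    rwa [uIcc_of_le hT.le]
  have hmeas : StronglyMeasurableAtFilter g (nhds t) volume :=
    (hg_cont.mono Ioo_subset_Icc_self).stronglyMeasurableAtFilter isOpen_Ioo t ht
  have hG : HasDerivAt (fun u => ∫ s in (0:ℝ)..u, g s) (g t) t :=
    intervalIntegral.integral_hasDerivAt_right hint1 hmeas hcontAt
  set IT : ℝ := ∫ s in (0:ℝ)..T, g s with hIT
  have hEq : R =ᶠ[nhds t] fun u => lam * (IT - ∫ s in (0:ℝ)..u, g s) := by
    filter_upwards [Ioo_mem_nhds ht.1 ht.2] with u hu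
    have hu1 : IntervalIntegrable g volume 0 u := by
      apply ContinuousOn.intervalIntegrable
      apply hg_cont.mono
      rw [uIcc_of_le hu.1.le]
      exact Icc_subset_Icc le_rfl hu.2.le
    have hu2 : IntervalIntegrable g volume u T := by
      apply ContinuousOn.intervalIntegrable
      apply hg_cont.mono
      rw [uIcc_of_le hu.2.le]
      exact Icc_subset_Icc hu.1.le le_rfl
    have hsplit : (∫ s in (0:ℝ)..u, g s) + ∫ s in u..T, g s = IT :=
      intervalIntegral.integral_add_adjacent_intervals hu1 hu2
    rw [hR u]
    have : (∫ s in u..T, g s) = IT - ∫ s in (0:ℝ)..u, g s := by linarith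
    rw [this]
  have hD : HasDerivAt (fun u => lam * (IT - ∫ s in (0:ℝ)..u, g s)) (lam * (0 - g t)) t :=
    ((hasDerivAt_const t IT).sub hG).const_mul lam
  have hDR : HasDerivAt R (lam * (0 - g t)) t := hD.congr_of_eventuallyEq hEq
  have hkey : R t - y t = -((1 - F (y t)) / f (y t)) := by
    have := heq t htIcc
    rw [hR t]; linarith [hR t, this]
  have : lam * (0 - g t) = lam * (1 - F (y t)) * (R t - y t) := by
    rw [hkey, hg]
    field_simp
    ring
  rwa [this] at hDR
end

section
/- Under the threshold allocation with prices P_j(t) = Σ_{i=j}^{N}(r_i^{1/η} − r_{i+1}^{1/η})·y_i^{1/η}(t), an application with true type x ∈ [y_j(t), y_{j−1}(t)) weakly prefers its assigned VMI j to any other VMI k that a misreport could obtain: (x·r_j)^{1/η} − P_j(t) ≥ (x·r_k)^{1/η} − P_k(t) for all k ∈ {1, …, N} with x ≥ y_k(t) or k > j. -/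
/-!
Write `f i = r i ^ (1/η)`. For `j ≤ k`, the price difference `P j - P k` is the sum over
`j ≤ i < k` of `(f i - f (i+1)) * y i ^ (1/η)`; the weights `f i - f (i+1)` are nonnegative and
sum to `f j - f k`, and every threshold `y i` with `i ≥ j` is at most the true type `x`. Hence
`P j - P k ≤ x ^ (1/η) * (f j - f k)`, which is the claimed inequality. A VMI `k < j` cannot be
obtained at all, since it would require `x ≥ y k ≥ y (j - 1) > x`.
-/

open Finset

noncomputable def thresholdPrice (N : ℕ) (e : ℝ) (r y : ℕ → ℝ) (j : ℕ) : ℝ :=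
  ∑ i ∈ Icc j N, (r i ^ e - r (i + 1) ^ e) * y i ^ e

theorem antitoneOn_Icc_of_succ_le {α : Type*} [Preorder α] {f : ℕ → α} {a b : ℕ}
    (hf : ∀ i, a ≤ i → i < b → f (i + 1) ≤ f i) : AntitoneOn f (Set.Icc a b) := by
  rintro m ⟨ham, -⟩ n ⟨-, hnb⟩ hmn
  induction n, hmn using Nat.le_induction with
  | base => exact le_rfl
  | succ n hmn ih => exact (hf n (ham.trans hmn) hnb).trans (ih (by omega))

theorem sum_Ico_sub_mul_le_of_le {f w : ℕ → ℝ} {j k : ℕ} {c : ℝ} (hjk : j ≤ k)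
    (hf : ∀ i ∈ Ico j k, f (i + 1) ≤ f i) (hw : ∀ i ∈ Ico j k, w i ≤ c) :
    ∑ i ∈ Ico j k, (f i - f (i + 1)) * w i ≤ (f j - f k) * c := by
  have htelescope : ∑ i ∈ Ico j k, (f i - f (i + 1)) = f j - f k := by
    rw [← neg_sub (f k), ← sum_Ico_sub f hjk, ← sum_neg_distrib]
    simp only [neg_sub]
  calc ∑ i ∈ Ico j k, (f i - f (i + 1)) * w i
      ≤ ∑ i ∈ Ico j k, (f i - f (i + 1)) * c :=
        sum_le_sum fun i hi => mul_le_mul_of_nonneg_left (hw i hi) (sub_nonneg.2 (hf i hi))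
    _ = (f j - f k) * c := by rw [← sum_mul, htelescope]

theorem sum_Icc_eq_sum_Ico_add_sum_Icc {M : Type*} [AddCommMonoid M] (g : ℕ → M) {j k N : ℕ}
    (hjk : j ≤ k) (hkN : k ≤ N + 1) :
    ∑ i ∈ Icc j N, g i = ∑ i ∈ Ico j k, g i + ∑ i ∈ Icc k N, g i := by
  simp only [← Ico_add_one_right_eq_Icc]
  exact (sum_Ico_consecutive g hjk hkN).symm

theorem thresholdPrice_eq_sum_Ico_add {N j k : ℕ} {e : ℝ} {r y : ℕ → ℝ} (hjk : j ≤ k)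
    (hkN : k ≤ N + 1) :
    thresholdPrice N e r y j =
      ∑ i ∈ Ico j k, (r i ^ e - r (i + 1) ^ e) * y i ^ e + thresholdPrice N e r y k :=
  sum_Icc_eq_sum_Ico_add_sum_Icc _ hjk hkN

theorem rpow_mul_sub_thresholdPrice_le {N j k : ℕ} {e x : ℝ} {r y : ℕ → ℝ} (he : 0 ≤ e)
    (hjk : j ≤ k) (hkN : k ≤ N) (hr : AntitoneOn r (Set.Icc j N)) (hrN : 0 ≤ r N)
    (hy : AntitoneOn y (Set.Icc j N)) (hyN : 0 ≤ y N) (hx : y j ≤ x) :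
    (x * r k) ^ e - thresholdPrice N e r y k ≤ (x * r j) ^ e - thresholdPrice N e r y j := by
  have hr_nonneg : ∀ i ∈ Set.Icc j N, 0 ≤ r i := fun i hi =>
    hrN.trans (hr hi ⟨hi.1.trans hi.2, le_rfl⟩ hi.2)
  have hy_nonneg : ∀ i ∈ Set.Icc j N, 0 ≤ y i := fun i hi =>
    hyN.trans (hy hi ⟨hi.1.trans hi.2, le_rfl⟩ hi.2)
  have hx_nonneg : 0 ≤ x := (hy_nonneg j ⟨le_rfl, hjk.trans hkN⟩).trans hx
  have hgap := sum_Ico_sub_mul_le_of_le (f := fun i => r i ^ e) (w := fun i => y i ^ e)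
    (c := x ^ e) hjk
    (fun i hi => by
      rw [mem_Ico] at hi
      exact Real.rpow_le_rpow (hr_nonneg (i + 1) ⟨by omega, by omega⟩)
        (hr ⟨hi.1, by omega⟩ ⟨by omega, by omega⟩ (by omega)) he)
    (fun i hi => by
      rw [mem_Ico] at hi
      exact Real.rpow_le_rpow (hy_nonneg i ⟨hi.1, by omega⟩)
        ((hy ⟨le_rfl, by omega⟩ ⟨hi.1, by omega⟩ hi.1).trans hx) he)
  rw [Real.mul_rpow hx_nonneg (hr_nonneg k ⟨hjk, hkN⟩),
    Real.mul_rpow hx_nonneg (hr_nonneg j ⟨le_rfl, hjk.trans hkN⟩),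
    thresholdPrice_eq_sum_Ico_add hjk (by omega)]
  linarith

theorem le_of_obtainable_index {N j k : ℕ} {x : ℝ} {y : ℕ → ℝ} (hy : AntitoneOn y (Set.Icc 1 N))
    (hjN : j ≤ N) (hk1 : 1 ≤ k) (hx' : j = 1 ∨ x < y (j - 1)) (hk : y k ≤ x ∨ j < k) :
    j ≤ k := by
  by_contra! hkj
  rcases hx' with rfl | hx'
  · omega
  rcases hk with hyk | hjk
  · linarith [hy ⟨hk1, by omega⟩ ⟨by omega, by omega⟩ (by omega : k ≤ j - 1)]
  · omega

theorem incentive_compatibility_general (N : ℕ) (η : ℝ) (hη : 1 ≤ η)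
    (r y : ℕ → ℝ)
    (hr : ∀ i, 1 ≤ i → i < N → r (i+1) ≤ r i) (hrN : 0 < r N)
    (hy : ∀ i, 1 ≤ i → i < N → y (i+1) < y i) (hyN : 0 < y N)
    (P : ℕ → ℝ)
    (hP : ∀ j, P j = ∑ i ∈ Finset.Icc j N,
        (r i ^ (1/η) - r (i+1) ^ (1/η)) * y i ^ (1/η))
    (j : ℕ) (hj1 : 1 ≤ j) (hjN : j ≤ N) (x : ℝ)
    (hx : y j ≤ x) (hx' : j = 1 ∨ x < y (j - 1)) :
    ∀ k, 1 ≤ k → k ≤ N → (y k ≤ x ∨ j < k) →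
      (x * r k) ^ (1/η) - P k ≤ (x * r j) ^ (1/η) - P j := by
  intro k hk1 hkN hk
  obtain rfl : P = thresholdPrice N (1 / η) r y := funext hP
  have hr_anti : AntitoneOn r (Set.Icc 1 N) := antitoneOn_Icc_of_succ_le hr
  have hy_anti : AntitoneOn y (Set.Icc 1 N) :=
    antitoneOn_Icc_of_succ_le fun i hi1 hiN => (hy i hi1 hiN).le
  have hjk : j ≤ k := le_of_obtainable_index hy_anti hjN hk1 hx' hk
  have hsub : Set.Icc j N ⊆ Set.Icc 1 N := Set.Icc_subset_Icc_left hj1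
  exact rpow_mul_sub_thresholdPrice_le (by positivity) hjk hkN (hr_anti.mono hsub) hrN.le
    (hy_anti.mono hsub) hyN.le hx

theorem incentive_compatibility (N : ℕ) (hN : 1 ≤ N) (η : ℝ) (hη : 1 ≤ η)
    (r y : ℕ → ℝ)
    (hr : ∀ i, 1 ≤ i → i < N → r (i+1) ≤ r i) (hrN : 0 < r N)
    (hrconv : r (N+1) = 0)
    (hy : ∀ i, 1 ≤ i → i < N → y (i+1) < y i) (hyN : 0 < y N)
    (P : ℕ → ℝ)
    (hP : ∀ j, P j = ∑ i ∈ Finset.Icc j N,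
        (r i ^ (1/η) - r (i+1) ^ (1/η)) * y i ^ (1/η))
    (j : ℕ) (hj1 : 1 ≤ j) (hjN : j ≤ N) (x : ℝ)
    (hx : y j ≤ x) (hx' : j = 1 ∨ x < y (j - 1)) :
    ∀ k, 1 ≤ k → k ≤ N → (y k ≤ x ∨ j < k) →
      (x * r k) ^ (1/η) - P k ≤ (x * r j) ^ (1/η) - P j :=
  incentive_compatibility_general N η hη r y hr hrN hy hyN P hP j hj1 hjN x hx hx'
end
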